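/- Let Q be a quiver with one vertex and one loop. The polynomials n_d(x) defined by the nullcone recursion satisfy n_d(x) = x^{d(d-1)} for all d ≥ 0. Equivalently, in the twisted power series ring with t·t = q^{-1}·t^2 type twisting coming from the Euler form ⟨d,e⟩ = 0 (for the one-loop quiver), one has (∑_{d≥0} t^d/(q)_d)^{-1} = ∑_{d≥0} (-1)^d q^{d(d+1)/2 - d^2} · q^{d(d-1)} t^d/(q)_d, i.e. the generating function identity ∑_d (q^{d(d-1)}/|GL_d(F_q)|) t^d · ∑_d t^d/(q)_d = 1 holds after the appropriate twist. -/

import Mathlib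

/-!
Write `e(t) = ∑ tᵈ / (q)_d` and `E(t) = ∑ (-1)ᵈ q^{d(d-1)/2} tᵈ / (q)_d`. They satisfy the
`q`-difference equations `e(t) (1 - t) = e(qt)` and `E(t) = (1 - t) E(qt)`, so `h = e E` satisfies
`h(t) = h(qt)`, i.e. `hₙ = qⁿ hₙ`. Since `q` is not a root of unity, `h = h₀ = 1`.
For the one-loop quiver, `q^{d(d-1)} / ((-1)ᵈ q^{d(d-1)/2} (q)_d)` is exactly the `d`-th
coefficient of `E`, because `q^{d(d-1)} = (q^{d(d-1)/2})²`.
-/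

/-- The q-Pochhammer symbol. -/
noncomputable def qPoch {K : Type*} [Field K] (q : K) (n : ℕ) : K :=
  ∏ i ∈ Finset.range n, (1 - q ^ (i + 1))

open PowerSeries

section QExponential

variable {K : Type*} [Field K] (q : K)

theorem qPoch_succ (n : ℕ) : qPoch q (n + 1) = qPoch q n * (1 - q ^ (n + 1)) :=
  Finset.prod_range_succ _ n

theorem qPoch_ne_zero (hq : ∀ n ≠ 0, q ^ n ≠ 1) (n : ℕ) : qPoch q n ≠ 0 :=
  Finset.prod_ne_zero_iff.mpr fun i _ => sub_ne_zero.mpr (hq (i + 1) i.succ_ne_zero).symm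

noncomputable def qExp : K⟦X⟧ :=
  mk fun d => 1 / qPoch q d

/-- `E_q(-t)`, where `E_q(t) = ∑ q^{d(d-1)/2} tᵈ / (q)_d` is Euler's second `q`-exponential. -/
noncomputable def qExpBigNeg : K⟦X⟧ :=
  mk fun d => (-1) ^ d * q ^ (d * (d - 1) / 2) / qPoch q d

variable {q}

theorem qExp_mul_one_sub_X (hq : ∀ n ≠ 0, q ^ n ≠ 1) :
    qExp q * (1 - X) = rescale q (qExp q) := by
  ext (_ | n)
  · simp [qExp, qPoch]
  · have hP := qPoch_ne_zero q hq n
    have hn : 1 - q ^ (n + 1) ≠ 0 := sub_ne_zero.mpr (hq (n + 1) n.succ_ne_zero).symm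
    simp only [qExp, mul_sub, mul_one, map_sub, coeff_succ_mul_X, coeff_mk, coeff_rescale,
      qPoch_succ]
    field_simp
    ring

theorem qExpBigNeg_eq_one_sub_X_mul (hq : ∀ n ≠ 0, q ^ n ≠ 1) :
    qExpBigNeg q = (1 - X) * rescale q (qExpBigNeg q) := by
  ext (_ | n)
  · simp [qExpBigNeg, qPoch, rescale_mk]
  · have hP := qPoch_ne_zero q hq n
    have hn : 1 - q ^ (n + 1) ≠ 0 := sub_ne_zero.mpr (hq (n + 1) n.succ_ne_zero).symm
    simp only [qExpBigNeg, sub_mul, one_mul, map_sub, coeff_succ_X_mul, coeff_mk, coeff_rescale,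
      qPoch_succ, Nat.triangle_succ]
    field_simp
    ring

theorem qExp_mul_qExpBigNeg (hq : ∀ n ≠ 0, q ^ n ≠ 1) : qExp q * qExpBigNeg q = 1 := by
  have hfix : rescale q (qExp q * qExpBigNeg q) = qExp q * qExpBigNeg q := by
    rw [map_mul, ← qExp_mul_one_sub_X hq, mul_assoc, ← qExpBigNeg_eq_one_sub_X_mul hq]
  ext (_ | n)
  · simp [qExp, qExpBigNeg, qPoch]
  · have hcoeff := congrArg (coeff (n + 1)) hfix
    rw [coeff_rescale] at hcoeff
    rw [coeff_one, if_neg n.succ_ne_zero]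
    by_contra hne
    exact hq (n + 1) n.succ_ne_zero ((mul_eq_right₀ hne).mp hcoeff)

end QExponential

theorem RatFunc.X_pow_ne_one {K : Type*} [Field K] {n : ℕ} (hn : n ≠ 0) :
    (RatFunc.X : RatFunc K) ^ n ≠ 1 := by
  rw [← RatFunc.algebraMap_X, ← map_pow, ← map_one (algebraMap (Polynomial K) (RatFunc K)),
    (RatFunc.algebraMap_injective K).ne_iff]
  intro h
  simpa [hn] using congrArg Polynomial.natDegree h

/-- For the one-loop quiver (Euler form zero, so the twisted ring is the ordinary power
series ring `ℚ(q)[[t]]`), the nullcone generating function identity reads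
`∑_d (q^{d(d-1)}/|GL_d|) t^d · ∑_d t^d/(q)_d = 1`, where
`|GL_d| = (-1)^d q^{d(d-1)/2} (q)_d`; i.e. `n_d = q^{d(d-1)}` counts nilpotent matrices. -/
theorem one_loop_nullcone_generating_identity :
    (PowerSeries.mk fun d : ℕ =>
        (RatFunc.X : RatFunc ℚ) ^ (d * (d - 1)) /
          ((-1 : RatFunc ℚ) ^ d * (RatFunc.X : RatFunc ℚ) ^ (d * (d - 1) / 2) *
            qPoch (RatFunc.X : RatFunc ℚ) d)) *
      (PowerSeries.mk fun d : ℕ => 1 / qPoch (RatFunc.X : RatFunc ℚ) d)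
      = 1 := by
  have hq : ∀ n ≠ 0, (RatFunc.X : RatFunc ℚ) ^ n ≠ 1 := fun _ => RatFunc.X_pow_ne_one
  have hseries : (PowerSeries.mk fun d : ℕ =>
      (RatFunc.X : RatFunc ℚ) ^ (d * (d - 1)) /
        ((-1 : RatFunc ℚ) ^ d * (RatFunc.X : RatFunc ℚ) ^ (d * (d - 1) / 2) *
          qPoch (RatFunc.X : RatFunc ℚ) d)) = qExpBigNeg RatFunc.X := by
    ext d
    have hP := qPoch_ne_zero _ hq d
    have hsign : ((-1 : RatFunc ℚ) ^ d) ^ 2 = 1 := by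
      rw [← pow_mul, mul_comm, pow_mul, neg_one_sq, one_pow]
    rw [qExpBigNeg, coeff_mk, coeff_mk,
      ← Nat.two_mul_div_two_of_even (Nat.even_mul_pred_self d),
      Nat.mul_div_cancel_left _ two_pos, two_mul, pow_add]
    field_simp
    rw [hsign, mul_one]
  rw [hseries, mul_comm]
  exact qExp_mul_qExpBigNeg hq
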